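/- For every integer n ≥ 1, the piecewise function vol(t) defined by vol(t) = -(4n(2n+1)t² + 12nt - 9(2n+1))/(8n(4n+1)) for 0 ≤ t ≤ 3/(4n), vol(t) = (3-2t)²/(8(2n-1)) for 3/(4n) ≤ t ≤ 3/2, and vol(t) = 0 for t ≥ 3/2, satisfies (8n(4n+1)/(9(2n+1))) · ∫₀^∞ vol(t) dt = (4n²+3n+1)/(4n(2n+1)) whenever n ≥ 2. -/

import Mathlib

open MeasureTheory Set

/-! The integrand vanishes beyond `3/2` and is a quadratic polynomial on each of `(0, 3/(4n)]` and
`(3/(4n), 3/2]`, so the integral is a sum of two elementary polynomial integrals. -/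

theorem setIntegral_Ioi_ite_le_ite_le {f g : ℝ → ℝ} {a b c : ℝ} (hab : a ≤ b) (hbc : b ≤ c)
    (hf : IntervalIntegrable f volume a b) (hg : IntervalIntegrable g volume b c) :
    ∫ t in Ioi a, (if t ≤ b then f t else if t ≤ c then g t else 0) =
      (∫ t in a..b, f t) + ∫ t in b..c, g t := by
  set F : ℝ → ℝ := fun t => if t ≤ b then f t else if t ≤ c then g t else 0
  have hF_left : EqOn f F (uIoo a b) := fun t ht => by
    rw [uIoo_of_le hab] at ht
    simp only [F, if_pos ht.2.le]
  have hF_right : EqOn g F (uIoo b c) := fun t ht => by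
    rw [uIoo_of_le hbc] at ht
    simp only [F, if_neg (not_le.2 ht.1), if_pos ht.2.le]
  have hF_vanish : ∀ t ∈ Ioi a \ Ioc a c, F t = 0 := fun t ⟨hat, htc⟩ => by
    have hct : c < t := not_le.1 fun htc' => htc ⟨hat, htc'⟩
    simp only [F, if_neg (not_le.2 (hbc.trans_lt hct)), if_neg (not_le.2 hct)]
  calc ∫ t in Ioi a, F t = ∫ t in Ioc a c, F t :=
        setIntegral_eq_of_subset_of_forall_sdiff_eq_zero measurableSet_Ioi Ioc_subset_Ioi_self
          hF_vanish
    _ = (∫ t in a..b, F t) + ∫ t in b..c, F t := by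
        rw [intervalIntegral.integral_add_adjacent_intervals (hf.congr_uIoo hF_left)
          (hg.congr_uIoo hF_right), intervalIntegral.integral_of_le (hab.trans hbc)]
    _ = (∫ t in a..b, f t) + ∫ t in b..c, g t := by
        rw [intervalIntegral.integral_congr_uIoo hF_left, intervalIntegral.integral_congr_uIoo hF_right]

theorem integral_quadratic (p q r a b : ℝ) :
    ∫ x in a..b, (p * x ^ 2 + q * x + r) =
      p * (b ^ 3 - a ^ 3) / 3 + q * (b ^ 2 - a ^ 2) / 2 + r * (b - a) := by
  rw [intervalIntegral.integral_eq_sub_of_hasDerivAt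
    (f := fun x => p * x ^ 3 / 3 + q * x ^ 2 / 2 + r * x) (fun x _ => ?_)
    (Continuous.intervalIntegrable (by fun_prop) _ _)]
  · ring
  · refine (((((hasDerivAt_pow 3 x).const_mul p).div_const 3).add
      (((hasDerivAt_pow 2 x).const_mul q).div_const 2)).add
        ((hasDerivAt_id x).const_mul r)).congr_deriv ?_
    norm_num
    ring

theorem stmt_2_general (n : ℕ) (hn : 1 ≤ n) :
    (8 * (n : ℝ) * (4 * n + 1) / (9 * (2 * n + 1))) *
      ∫ t in Set.Ioi (0 : ℝ),
        (if t ≤ 3 / (4 * (n : ℝ)) then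
            -(4 * n * (2 * (n : ℝ) + 1) * t ^ 2 + 12 * n * t - 9 * (2 * n + 1)) / (8 * n * (4 * n + 1))
         else if t ≤ 3 / 2 then (3 - 2 * t) ^ 2 / (8 * (2 * n - 1))
         else 0)
      = (4 * n ^ 2 + 3 * n + 1) / (4 * n * (2 * n + 1)) := by
  have hn_real : (1 : ℝ) ≤ n := by exact_mod_cast hn
  have hkink_pos : (0 : ℝ) ≤ 3 / (4 * n) := by positivity
  have hkink_le : 3 / (4 * (n : ℝ)) ≤ 3 / 2 := by gcongr; linarith
  rw [setIntegral_Ioi_ite_le_ite_le hkink_pos hkink_le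
      (Continuous.intervalIntegrable (by fun_prop) _ _) (Continuous.intervalIntegrable (by fun_prop) _ _),
    intervalIntegral.integral_congr (a := 0) (g := fun t => (-(4 * n * (2 * n + 1)) / (8 * n * (4 * n + 1)))
      * t ^ 2 + (-(12 * n) / (8 * n * (4 * n + 1))) * t + 9 * (2 * n + 1) / (8 * n * (4 * n + 1)))
      fun t _ => by ring,
    intervalIntegral.integral_congr (a := 3 / (4 * n)) (g := fun t => (4 / (8 * (2 * n - 1))) * t ^ 2
      + (-12 / (8 * (2 * n - 1))) * t + 9 / (8 * (2 * n - 1))) fun t _ => by ring,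
    integral_quadratic, integral_quadratic]
  have h2n : (n * 2 - 1 : ℝ) ≠ 0 := by linarith
  field_simp
  ring

theorem stmt_2 (n : ℕ) (hn : 1 ≤ n) (hn2 : 2 ≤ n) :
    (8 * (n : ℝ) * (4 * n + 1) / (9 * (2 * n + 1))) *
      ∫ t in Set.Ioi (0 : ℝ),
        (if t ≤ 3 / (4 * (n : ℝ)) then
            -(4 * n * (2 * (n : ℝ) + 1) * t ^ 2 + 12 * n * t - 9 * (2 * n + 1)) / (8 * n * (4 * n + 1))
         else if t ≤ 3 / 2 then (3 - 2 * t) ^ 2 / (8 * (2 * n - 1))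
         else 0)
      = (4 * n ^ 2 + 3 * n + 1) / (4 * n * (2 * n + 1)) :=
  stmt_2_general n hn
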